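/- Suppose α ≥ γ and let w = (w₁,w₂) ∈ ℝ × ℝ^d satisfy ‖w‖₂ = 1 and σ_w > 0. Then the population RCAD surrogate admits the closed form M_D(w) = (1/2)·exp( β·w₁ − α + σ_w²/2 )·erfc( (σ_w + a_w)/√2 ) + (1/2)·exp( −β·w₁ + σ_w²/2 )·erfc( (σ_w − a_w)/√2 ). -/

import Mathlib

open MeasureTheory ProbabilityTheory Real Filter

noncomputable section

namespace RCAD

/-- The complementary error function `erfc x = (2/√π) ∫_x^∞ e^{-z²} dz`. -/
def erfc (x : ℝ) : ℝ := (2 / Real.sqrt Real.pi) * ∫ z in Set.Ioi x, Real.exp (-z ^ 2)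

/-- The inverse of `erfc` (on `(0,2)`). -/
def erfcInv : ℝ → ℝ := Function.invFun erfc

/-- Parameter/input space `ℝ × ℝ^d` (true feature coordinate, noisy coordinates). -/
abbrev Vec (d : ℕ) := ℝ × (Fin d → ℝ)

variable {d : ℕ}

/-- Inner product `⟨w, x⟩ = w₁ x₁ + ⟨w₂, x₂⟩` on `ℝ × ℝ^d`. -/
def ip (w x : Vec d) : ℝ := w.1 * x.1 + ∑ i, w.2 i * x.2 i

/-- Euclidean norm on `ℝ × ℝ^d`. -/
def norm2 (w : Vec d) : ℝ := Real.sqrt (w.1 ^ 2 + ∑ i, w.2 i ^ 2)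

/-- Euclidean norm on `ℝ^d`. -/
def enorm (v : Fin d → ℝ) : ℝ := Real.sqrt (∑ i, v i ^ 2)

/-- The quadratic form `wᵀ Σ̃ w` of the block-diagonal matrix `Σ̃ = diag(σ₁², Σ₂)`. -/
def quadForm (σ₁ : ℝ) (Cov : Matrix (Fin d) (Fin d) ℝ) (w : Vec d) : ℝ :=
  σ₁ ^ 2 * w.1 ^ 2 + ∑ i, ∑ j, w.2 i * Cov i j * w.2 j

/-- `σ_w = √(wᵀ Σ̃ w)`. -/
def sigw (σ₁ : ℝ) (Cov : Matrix (Fin d) (Fin d) ℝ) (w : Vec d) : ℝ :=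
  Real.sqrt (quadForm σ₁ Cov w)

/-- The trace of `Σ̃ = diag(σ₁², Σ₂)`. -/
def traceTilde (σ₁ : ℝ) (Cov : Matrix (Fin d) (Fin d) ℝ) : ℝ := σ₁ ^ 2 + Cov.trace

/-- The operator norm of the symmetric positive matrix `Σ̃`, characterized variationally as the
maximum of the quadratic form on the unit sphere. -/
def opNorm (σ₁ : ℝ) (Cov : Matrix (Fin d) (Fin d) ℝ) : ℝ :=
  ⨆ w : {w : Vec d // norm2 w = 1}, quadForm σ₁ Cov w

/-- The smallest eigenvalue of `Σ̃`, characterized variationally as the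
minimum of the quadratic form on the unit sphere. -/
def lamMin (σ₁ : ℝ) (Cov : Matrix (Fin d) (Fin d) ℝ) : ℝ :=
  ⨅ w : {w : Vec d // norm2 w = 1}, quadForm σ₁ Cov w

/-- Standard Gaussian measure on `ℝ^k`. -/
def stdGaussian (k : ℕ) : Measure (Fin k → ℝ) :=
  Measure.pi fun _ => gaussianReal 0 1

/-- Base randomness: a uniform sign bit, a standard Gaussian for the first coordinate, and a
standard Gaussian vector for the noisy coordinates. -/
def baseMeasure (d : ℕ) : Measure (Bool × (ℝ × (Fin d → ℝ))) :=
  ((PMF.uniformOfFintype Bool).toMeasure).prod ((gaussianReal 0 1).prod (stdGaussian d))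

/-- sign of a boolean, as `±1`. -/
def sgn (b : Bool) : ℝ := if b then 1 else -1

/-- Generator of one sample `(x, y)` from `D`: `y` uniform on `{-1,1}`,
`x₁ ~ N(β y, σ₁²)`, `x₂ ~ N(0, Σ₂)` (realized as `Σ₂^{1/2}` applied to a standard Gaussian). -/
def gen (β σ₁ : ℝ) (Cov : Matrix (Fin d) (Fin d) ℝ) (hCov : Cov.PosDef)
    (p : Bool × (ℝ × (Fin d → ℝ))) : Vec d × ℝ :=
  ((β * sgn p.1 + σ₁ * p.2.1, Matrix.mulVec (hCov.posSemidef.1.eigenvectorUnitary.1 *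
    Matrix.diagonal ((↑) ∘ (Real.sqrt ·) ∘ hCov.posSemidef.1.eigenvalues) *
    (star hCov.posSemidef.1.eigenvectorUnitary : Matrix (Fin d) (Fin d) ℝ)) p.2.2), sgn p.1)

/-- The data distribution `D` on `(x, y) ∈ (ℝ × ℝ^d) × {-1,1}`. -/
def Dist (β σ₁ : ℝ) (Cov : Matrix (Fin d) (Fin d) ℝ) (hCov : Cov.PosDef) :
    Measure (Vec d × ℝ) :=
  Measure.map (gen β σ₁ Cov hCov) (baseMeasure d)

/-- The i.i.d. `n`-fold sample distribution `D^n`. -/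
def sampleDist (β σ₁ : ℝ) (Cov : Matrix (Fin d) (Fin d) ℝ) (hCov : Cov.PosDef) (n : ℕ) :
    Measure (Fin n → Vec d × ℝ) :=
  Measure.map (fun Z : Fin n → Bool × (ℝ × (Fin d → ℝ)) => fun i => gen β σ₁ Cov hCov (Z i))
    (Measure.pi fun _ => baseMeasure d)

/-- Population 0-1 error of the linear classifier `x ↦ sign⟨w,x⟩`. -/
def popErr (β σ₁ : ℝ) (Cov : Matrix (Fin d) (Fin d) ℝ) (hCov : Cov.PosDef) (w : Vec d) : ℝ :=
  (Dist β σ₁ Cov hCov {p | p.2 * ip w p.1 < 0}).toReal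

/-- Empirical margin-`γ` error `(1/n) #{i : yᵢ ⟨w,xᵢ⟩ < γ}`. -/
def empMarginErr {n : ℕ} (γ : ℝ) (S : Fin n → Vec d × ℝ) (w : Vec d) : ℝ :=
  (∑ i, if (S i).2 * ip w (S i).1 < γ then (1 : ℝ) else 0) / n

/-- The gradient convention `∇ₓ l_γ(w;(x,y)) = -y·w` if `y⟨w,x⟩ < γ`, else `0`. -/
def lossGrad (γ : ℝ) (w : Vec d) (x : Vec d) (y : ℝ) : Vec d :=
  if y * ip w x < γ then (-y) • w else 0

/-- Population RCAD surrogate `M_D(w) = E[exp(-|⟨w, x + α ∇ₓ l_γ(w;(x,y))⟩|)]`. -/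
def MD (β σ₁ : ℝ) (Cov : Matrix (Fin d) (Fin d) ℝ) (hCov : Cov.PosDef) (γ α : ℝ)
    (w : Vec d) : ℝ :=
  ∫ p, Real.exp (-|ip w (p.1 + α • lossGrad γ w p.1 p.2)|) ∂(Dist β σ₁ Cov hCov)

/-- Empirical RCAD surrogate over a sample. -/
def MDhat {n : ℕ} (γ α : ℝ) (S : Fin n → Vec d × ℝ) (w : Vec d) : ℝ :=
  (∑ i, Real.exp (-|ip w ((S i).1 + α • lossGrad γ w (S i).1 (S i).2)|)) / n

/-- `a_w = (β w₁ - γ)/σ_w`. -/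
def aw (β σ₁ γ : ℝ) (Cov : Matrix (Fin d) (Fin d) ℝ) (w : Vec d) : ℝ :=
  (β * w.1 - γ) / sigw σ₁ Cov w

/-- Partial derivative of a function on `ℝ × ℝ^d` in the first coordinate. -/
def dw1 (F : Vec d → ℝ) (w : Vec d) : ℝ := deriv (fun t => F (t, w.2)) w.1

/-- Gradient of a function on `ℝ × ℝ^d` in the last `d` coordinates. -/
def gradw2 (F : Vec d → ℝ) (w : Vec d) : Fin d → ℝ :=
  fun i => fderiv ℝ (fun v : Fin d → ℝ => F (w.1, v)) w.2 (Pi.single i 1)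

/-- Full gradient of a function on `ℝ × ℝ^d`. -/
def grad (F : Vec d → ℝ) (w : Vec d) : Vec d := (dw1 F w, gradw2 F w)


open scoped ENNReal NNReal

local notation "φ" => gaussianPDFReal 0 1
local notation "g01" => gaussianReal 0 1

lemma phi_eq (y : ℝ) : φ y = (Real.sqrt (2*π))⁻¹ * Real.exp (-y^2/2) := by
  simp [gaussianPDFReal]

lemma phi_nonneg (y : ℝ) : 0 ≤ φ y := gaussianPDFReal_nonneg 0 1 y

lemma phi_meas : Measurable φ := measurable_gaussianPDFReal 0 1

lemma integral_g01 (f : ℝ → ℝ) :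
    ∫ x, f x ∂(gaussianReal 0 1) = ∫ x, f x * φ x := by
  rw [gaussianReal_of_var_ne_zero 0 one_ne_zero]
  have h1 : (gaussianPDF 0 1) = fun x => ((Real.toNNReal (φ x) : ℝ≥0) : ℝ≥0∞) := by
    funext x; rfl
  rw [h1, integral_withDensity_eq_integral_smul (phi_meas.real_toNNReal) f]
  congr 1
  funext x
  simp [NNReal.smul_def, Real.coe_toNNReal _ (phi_nonneg x), mul_comm]

lemma integrable_bdd {α : Type*} [MeasurableSpace α] (μ : Measure α) [IsFiniteMeasure μ]
    {f : α → ℝ} (hm : AEStronglyMeasurable f μ) (C : ℝ) (hb : ∀ a, |f a| ≤ C) :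
    Integrable f μ :=
  (integrable_const C).mono' hm (ae_of_all _ (by simpa [Real.norm_eq_abs] using hb))

lemma phi_affine_eq {b : ℝ} (hb : b ≠ 0) (c : ℝ) :
    (fun t => φ ((t - c)/b))
      = fun t => |b| * gaussianPDFReal 0 (⟨b^2, sq_nonneg b⟩ * 1) (t - c) := by
  funext t
  rw [div_eq_inv_mul, gaussianPDFReal_inv_mul hb]
  simp
  left; congr 1; ext; exact (mul_one (b^2)).symm

lemma integrable_phi_affine {b : ℝ} (hb : b ≠ 0) (c : ℝ) :
    Integrable (fun t => φ ((t - c)/b)) := by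
  rw [phi_affine_eq hb c]
  exact ((integrable_gaussianPDFReal 0 _).comp_sub_right c).const_mul _

lemma integral_phi_affine {b : ℝ} (hb : b ≠ 0) (c : ℝ) :
    ∫ t, φ ((t - c)/b) = |b| := by
  rw [phi_affine_eq hb c]
  rw [integral_const_mul]
  rw [integral_sub_right_eq_self (fun t => gaussianPDFReal 0 (⟨b^2, sq_nonneg b⟩ * 1) t) c]
  rw [integral_gaussianPDFReal_eq_one]
  · simp
  · intro h
    have h' : b^2 * 1 = 0 := congrArg NNReal.toReal h
    exact hb (by simpa using h')


lemma conv_id {a b : ℝ} (hb : b ≠ 0) (t : ℝ) :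
    ∫ x, φ ((t - a*x)/b) * φ x
      = |b| * ((Real.sqrt (a^2+b^2))⁻¹ * φ (t / Real.sqrt (a^2+b^2))) := by
  have hab : (0:ℝ) < a^2 + b^2 := by positivity
  set r : ℝ := Real.sqrt (a^2+b^2) with hr_def
  have hr : 0 < r := Real.sqrt_pos.mpr hab
  have hr2 : r^2 = a^2 + b^2 := Real.sq_sqrt hab.le
  set k : ℝ := (a^2+b^2)/(2*b^2) with hk_def
  have hk : 0 < k := by positivity
  set c : ℝ := a*t/(a^2+b^2) with hc_def
  have hpt : ∀ x, φ ((t - a*x)/b) * φ x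
      = ((Real.sqrt (2*π))⁻¹ * (Real.sqrt (2*π))⁻¹ * Real.exp (-t^2/(2*(a^2+b^2))))
        * Real.exp (-(k * (x - c)^2)) := by
    intro x
    rw [phi_eq, phi_eq]
    have h2 : -((t - a*x)/b)^2/2 + -x^2/2 = -t^2/(2*(a^2+b^2)) + -(k*(x-c)^2) := by
      rw [hk_def, hc_def]; field_simp; ring
    calc ((Real.sqrt (2*π))⁻¹ * Real.exp (-((t-a*x)/b)^2/2))
          * ((Real.sqrt (2*π))⁻¹ * Real.exp (-x^2/2))
        = (Real.sqrt (2*π))⁻¹ * (Real.sqrt (2*π))⁻¹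
            * Real.exp (-((t-a*x)/b)^2/2 + -x^2/2) := by rw [Real.exp_add]; ring
      _ = _ := by rw [h2, Real.exp_add]; ring
  simp_rw [hpt]
  rw [integral_const_mul]
  have hshift : ∫ x, Real.exp (-(k * (x - c)^2)) = ∫ x, Real.exp (-(k * x^2)) :=
    integral_sub_right_eq_self (fun x => Real.exp (-(k * x^2))) c
  rw [hshift]
  have hg : ∫ x : ℝ, Real.exp (-(k * x^2)) = Real.sqrt (π / k) := by
    simpa using integral_gaussian k
  rw [hg]
  have hsq : π / k = (|b| * r⁻¹ * Real.sqrt (2*π))^2 := by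
    rw [mul_pow, mul_pow, sq_abs, Real.sq_sqrt (by positivity), hk_def]
    rw [inv_pow, hr2]
    field_simp
  rw [hsq, Real.sqrt_sq (by positivity)]
  rw [phi_eq]
  have hexp : -(t/r)^2/2 = -t^2/(2*(a^2+b^2)) := by
    rw [div_pow, hr2]; field_simp
  rw [hexp]
  have h0 : Real.sqrt (2*π) ≠ 0 := by positivity
  field_simp


lemma integral_g01_comp_neg (f : ℝ → ℝ) :
    ∫ x, f (-x) ∂(gaussianReal 0 1) = ∫ x, f x ∂(gaussianReal 0 1) := by
  rw [integral_g01, integral_g01]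
  have h1 : ∀ x : ℝ, f (-x) * φ x = (fun y => f y * φ y) (-1 * x) := by
    intro x
    simp only [neg_one_mul]
    rw [phi_eq, phi_eq]
    ring_nf
  simp_rw [h1]
  rw [MeasureTheory.Measure.integral_comp_mul_left (fun y => f y * φ y) (-1)]
  norm_num

lemma gaussian_scale (g : ℝ → ℝ) (m a : ℝ) :
    ∫ x, g (m + a*x) ∂(gaussianReal 0 1) = ∫ x, g (m + |a| * x) ∂(gaussianReal 0 1) := by
  rcases abs_cases a with ⟨h, _⟩ | ⟨h, _⟩
  · rw [h]
  · have : ∀ x : ℝ, g (m + a*x) = (fun y => g (m + |a| * y)) (-x) := by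
      intro x; simp only [h]; ring_nf
    simp_rw [this]
    exact integral_g01_comp_neg (fun y => g (m + |a| * y))

lemma lin2 {g : ℝ → ℝ} (hg : Measurable g) (hb1 : ∀ t, |g t| ≤ 1) (m a b : ℝ) :
    ∫ x, (∫ u, g (m + (a*x + b*u)) ∂(gaussianReal 0 1)) ∂(gaussianReal 0 1)
      = ∫ x, g (m + Real.sqrt (a^2+b^2) * x) ∂(gaussianReal 0 1) := by
  by_cases hb : b = 0
  · subst hb
    have h1 : ∀ x : ℝ, (∫ u, g (m + (a*x + 0*u)) ∂(gaussianReal 0 1)) = g (m + a * x) := by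
      intro x
      simp only [zero_mul, add_zero]
      simp [integral_const]
    simp_rw [h1]
    have h2 : Real.sqrt (a^2 + 0^2) = |a| := by
      rw [← Real.sqrt_sq_eq_abs]; norm_num
    rw [h2]
    exact gaussian_scale g m a
  · have hab : (0:ℝ) < a^2 + b^2 := by positivity
    set r : ℝ := Real.sqrt (a^2+b^2) with hr_def
    have hr : 0 < r := Real.sqrt_pos.mpr hab
    -- Step A: inner integral change of variables
    have stepA : ∀ x : ℝ, (∫ u, g (m + (a*x + b*u)) ∂(gaussianReal 0 1))
        = |b|⁻¹ * ∫ t, g (m + t) * φ ((t - a*x)/b) := by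
      intro x
      rw [integral_g01]
      set h : ℝ → ℝ := fun t => g (m + t) * φ ((t - a*x)/b) with hh
      have h1 : ∀ u : ℝ, g (m + (a*x + b*u)) * φ u = h (a*x + b*u) := by
        intro u
        simp only [hh]
        congr 2
        field_simp
        ring
      simp_rw [h1]
      have h2 : ∀ u : ℝ, h (a*x + b*u) = (fun v => h (v + a*x)) (b*u) := by
        intro u; simp only [add_comm]
      simp_rw [h2]
      rw [MeasureTheory.Measure.integral_comp_mul_left (fun v => h (v + a*x)) b]
      rw [integral_add_right_eq_self h (a*x)]
      rw [abs_inv, smul_eq_mul]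
    simp_rw [stepA]
    rw [integral_g01]
    -- Step B: Fubini
    set F : ℝ → ℝ → ℝ := fun x t => g (m + t) * φ ((t - a*x)/b) * φ x with hF
    have hFmeas : AEStronglyMeasurable (fun p : ℝ × ℝ => F p.1 p.2)
        ((volume : Measure ℝ).prod volume) := by
      apply Measurable.aestronglyMeasurable
      exact ((hg.comp (measurable_const.add measurable_snd)).mul
        (phi_meas.comp ((measurable_snd.sub (measurable_fst.const_mul a)).div_const b))).mul
        (phi_meas.comp measurable_fst)
    have hFx : ∀ x : ℝ, Integrable (fun t => F x t) := by
      intro x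
      apply Integrable.mul_const
      apply Integrable.mono' (integrable_phi_affine hb (a*x))
      · exact ((hg.comp (measurable_const.add measurable_id)).mul
          (phi_meas.comp ((measurable_id.sub measurable_const).div_const b))).aestronglyMeasurable
      · refine ae_of_all _ fun t => ?_
        rw [Real.norm_eq_abs, abs_mul]
        calc |g (m+t)| * |φ ((t - a*x)/b)| ≤ 1 * |φ ((t - a*x)/b)| := by
              apply mul_le_mul_of_nonneg_right (hb1 _) (abs_nonneg _)
          _ = φ ((t - a*x)/b) := by rw [one_mul, abs_of_nonneg (phi_nonneg _)]
    have hFint : Integrable (fun p : ℝ × ℝ => F p.1 p.2)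
        ((volume : Measure ℝ).prod volume) := by
      rw [integrable_prod_iff hFmeas]
      constructor
      · exact ae_of_all _ hFx
      · apply Integrable.mono' ((integrable_gaussianPDFReal 0 1).const_mul |b|)
        · exact hFmeas.norm.integral_prod_right'
        · refine ae_of_all _ fun x => ?_
          rw [Real.norm_eq_abs, abs_of_nonneg (integral_nonneg fun t => norm_nonneg _)]
          have hb2 : ∫ t, φ ((t - a*x)/b) * φ x = |b| * φ x := by
            rw [integral_mul_const, integral_phi_affine hb]
          calc (∫ t, ‖F x t‖) ≤ ∫ t, φ ((t - a*x)/b) * φ x := by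
                apply integral_mono (hFx x).norm
                  ((integrable_phi_affine hb (a*x)).mul_const (φ x))
                intro t
                simp only [hF, Real.norm_eq_abs]
                rw [abs_mul, abs_mul]
                rw [abs_of_nonneg (phi_nonneg _), abs_of_nonneg (phi_nonneg x)]
                apply mul_le_mul_of_nonneg_right _ (phi_nonneg x)
                calc |g (m+t)| * φ ((t - a*x)/b) ≤ 1 * φ ((t - a*x)/b) :=
                      mul_le_mul_of_nonneg_right (hb1 _) (phi_nonneg _)
                  _ = φ ((t - a*x)/b) := one_mul _
            _ = |b| * φ x := hb2
    have hswap : ∫ x, ∫ t, F x t = ∫ t, ∫ x, F x t := integral_integral_swap hFint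
    have lhs_eq : ∫ x, (|b|⁻¹ * ∫ t, g (m + t) * φ ((t - a*x)/b)) * φ x
        = |b|⁻¹ * ∫ x, ∫ t, F x t := by
      rw [← integral_const_mul]
      congr 1
      funext x
      have hx : ∫ t, F x t = (∫ t, g (m + t) * φ ((t - a*x)/b)) * φ x := by
        simp only [hF]
        rw [integral_mul_const]
      rw [hx]; ring
    rw [lhs_eq, hswap]
    have inner_eq : ∀ t : ℝ, ∫ x, F x t = g (m + t) * (|b| * (r⁻¹ * φ (t/r))) := by
      intro t
      have hx : (fun x => F x t) = fun x => g (m + t) * (φ ((t - a*x)/b) * φ x) := by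
        funext x; simp only [hF]; ring
      rw [hx, integral_const_mul, conv_id hb t]
    simp_rw [inner_eq]
    -- RHS
    rw [integral_g01]
    have rhs_eq : ∀ x : ℝ, g (m + r*x) * φ x = (fun t => g (m + t) * φ (t/r)) (r*x) := by
      intro x
      simp only
      congr 2
      field_simp
    simp_rw [rhs_eq]
    rw [MeasureTheory.Measure.integral_comp_mul_left (fun t => g (m + t) * φ (t/r)) r]
    simp_rw [show ∀ t : ℝ, g (m+t) * (|b| * (r⁻¹ * φ (t/r)))
        = (|b| * r⁻¹) * (g (m+t) * φ (t/r)) from fun t => by ring]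
    rw [integral_const_mul, smul_eq_mul, abs_inv, abs_of_pos hr]
    have hbne : |b| ≠ 0 := by simpa using hb
    field_simp


instance stdGaussian_prob (k : ℕ) : IsProbabilityMeasure (stdGaussian k) := by
  unfold stdGaussian; infer_instance

lemma lin_pi : ∀ (n : ℕ) (c : Fin n → ℝ) (m : ℝ) (g : ℝ → ℝ), Measurable g →
    (∀ t, |g t| ≤ 1) →
    ∫ z, g (m + ∑ i, c i * z i) ∂(stdGaussian n)
      = ∫ x, g (m + Real.sqrt (∑ i, c i ^ 2) * x) ∂(gaussianReal 0 1) := by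
  intro n
  induction n with
  | zero =>
    intro c m g hg h1
    have h2 : ∀ z : Fin 0 → ℝ, (∑ i, c i * z i) = 0 := by intro z; simp
    have h3 : ∑ i : Fin 0, c i ^ 2 = 0 := by simp
    simp_rw [h2, h3, Real.sqrt_zero, zero_mul, add_zero]
    rw [integral_const, integral_const]
    simp
  | succ n ih =>
    intro c m g hg h1
    have hmp := measurePreserving_piFinSuccAbove (fun _ : Fin (n+1) => gaussianReal 0 1) 0
    set e := MeasurableEquiv.piFinSuccAbove (fun _ : Fin (n+1) => ℝ) 0 with he
    have h0 : ∫ z, g (m + ∑ i, c i * z i) ∂(stdGaussian (n+1))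
        = ∫ p, g (m + ∑ i, c i * (e.symm p) i)
            ∂((gaussianReal 0 1).prod (stdGaussian n)) := by
      have : ((gaussianReal 0 1).prod (stdGaussian n))
          = Measure.map e (stdGaussian (n+1)) := by
        unfold stdGaussian
        exact hmp.map_eq.symm
      rw [this, integral_map_equiv]
      congr 1
      funext z
      rw [MeasurableEquiv.symm_apply_apply]
    rw [h0]
    have hsum : ∀ (x : ℝ) (y : Fin n → ℝ),
        (∑ i, c i * (e.symm (x, y)) i) = c 0 * x + ∑ j : Fin n, c j.succ * y j := by
      intro x y
      have hsymm : e.symm (x, y) = Fin.insertNth 0 x y := rfl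
      rw [hsymm, Fin.insertNth_zero, Fin.sum_univ_succ]
      simp
    have hmeasF : Measurable (fun p : ℝ × (Fin n → ℝ) =>
        g (m + ∑ i, c i * (e.symm p) i)) := by
      apply hg.comp
      apply measurable_const.add
      apply Finset.measurable_sum
      intro i _
      exact ((measurable_pi_apply i).comp e.symm.measurable).const_mul _
    rw [integral_prod _ (integrable_bdd _ hmeasF.aestronglyMeasurable 1 (fun p => h1 _))]
    simp_rw [hsum]
    have hstep : ∀ x : ℝ, ∫ y, g (m + (c 0 * x + ∑ j : Fin n, c j.succ * y j)) ∂(stdGaussian n)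
        = ∫ u, g (m + (c 0 * x + Real.sqrt (∑ j : Fin n, (c j.succ) ^ 2) * u))
            ∂(gaussianReal 0 1) := by
      intro x
      have harr : ∀ y : Fin n → ℝ, m + (c 0 * x + ∑ j : Fin n, c j.succ * y j)
          = (m + c 0 * x) + ∑ j : Fin n, c j.succ * y j := by intro y; ring
      simp_rw [harr]
      rw [ih (fun j => c j.succ) (m + c 0 * x) g hg h1]
      congr 1
      funext u
      ring_nf
    simp_rw [hstep]
    rw [lin2 hg h1 m (c 0) (Real.sqrt (∑ j : Fin n, (c j.succ) ^ 2))]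
    have hsq : (c 0)^2 + (Real.sqrt (∑ j : Fin n, (c j.succ) ^ 2))^2 = ∑ i : Fin (n+1), c i ^ 2 := by
      rw [Real.sq_sqrt (Finset.sum_nonneg fun j _ => sq_nonneg _), Fin.sum_univ_succ]
    rw [hsq]


lemma gauss1_eq (c x : ℝ) :
    gaussianPDFReal c 1 x = (Real.sqrt (2*π))⁻¹ * Real.exp (-(x-c)^2/2) := by
  simp [gaussianPDFReal]

lemma tail_Ici (c θ : ℝ) :
    ∫ x in Set.Ici θ, gaussianPDFReal c 1 x = (1/2) * erfc ((θ - c)/Real.sqrt 2) := by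
  simp_rw [gauss1_eq]
  rw [integral_const_mul]
  have h1 : ∫ x in Set.Ici (θ - c), Real.exp (-x^2/2)
      = ∫ x in Set.Ici θ, Real.exp (-(x-c)^2/2) := by
    have hmp : MeasurePreserving (fun x : ℝ => x + c) volume volume :=
      measurePreserving_add_right volume c
    have hemb : MeasurableEmbedding (fun x : ℝ => x + c) :=
      (MeasurableEquiv.addRight c).measurableEmbedding
    have hpre : (fun x : ℝ => x + c) ⁻¹' (Set.Ici θ) = Set.Ici (θ - c) := by
      ext x; simp [Set.mem_Ici, sub_le_iff_le_add, le_sub_iff_add_le]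
    have := hmp.setIntegral_preimage_emb hemb (fun y => Real.exp (-(y-c)^2/2)) (Set.Ici θ)
    rw [hpre] at this
    rw [← this]
    congr 1
    funext x
    congr 2
    ring
  rw [← h1, integral_Ici_eq_integral_Ioi]
  have h2 : ∫ x in Set.Ioi (θ - c), Real.exp (-x^2/2)
      = Real.sqrt 2 * ∫ z in Set.Ioi ((θ - c)/Real.sqrt 2), Real.exp (-z^2) := by
    have hb : (0:ℝ) < (Real.sqrt 2)⁻¹ := by positivity
    have h3 : ∀ x : ℝ, Real.exp (-x^2/2) = (fun z => Real.exp (-z^2)) ((Real.sqrt 2)⁻¹ * x) := by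
      intro x
      simp only
      congr 1
      rw [mul_pow, inv_pow, Real.sq_sqrt (by norm_num : (0:ℝ) ≤ 2)]
      ring
    simp_rw [h3]
    rw [integral_comp_mul_left_Ioi (fun z => Real.exp (-z^2)) _ hb]
    rw [inv_inv, smul_eq_mul]
    congr 2
    rw [inv_mul_eq_div]
  rw [h2, erfc]
  rw [Real.sqrt_mul (by norm_num : (0:ℝ) ≤ 2) π]
  have h4 : Real.sqrt 2 ≠ 0 := by positivity
  have h5 : Real.sqrt π ≠ 0 := by positivity
  have h6 : ∫ z in Set.Ioi ((θ - c)/Real.sqrt 2), Real.exp (-z^2)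
      = ∫ z in Set.Ioi ((θ - c)/Real.sqrt 2), Real.exp (-z^2) := rfl
  field_simp

lemma tail_Iio (c θ : ℝ) :
    ∫ x in Set.Iio θ, gaussianPDFReal c 1 x = (1/2) * erfc ((c - θ)/Real.sqrt 2) := by
  rw [← integral_Iic_eq_integral_Iio]
  have h1 := integral_comp_neg_Ioi (-θ) (gaussianPDFReal c 1)
  rw [neg_neg] at h1
  rw [← h1]
  have h2 : ∀ x : ℝ, gaussianPDFReal c 1 (-x) = gaussianPDFReal (-c) 1 x := by
    intro x; rw [gauss1_eq, gauss1_eq]; congr 2; ring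
  simp_rw [h2]
  rw [← integral_Ici_eq_integral_Ioi, tail_Ici]
  congr 2
  ring

lemma tilt (cst x : ℝ) :
    Real.exp (cst*x) * φ x = Real.exp (cst^2/2) * gaussianPDFReal cst 1 x := by
  rw [phi_eq, gauss1_eq]
  have h2 : Real.exp (cst*x) * Real.exp (-x^2/2)
      = Real.exp (cst^2/2) * Real.exp (-(x-cst)^2/2) := by
    rw [← Real.exp_add, ← Real.exp_add]; congr 1; ring
  calc Real.exp (cst*x) * ((Real.sqrt (2*π))⁻¹ * Real.exp (-x^2/2))
      = (Real.sqrt (2*π))⁻¹ * (Real.exp (cst*x) * Real.exp (-x^2/2)) := by ring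
    _ = (Real.sqrt (2*π))⁻¹ * (Real.exp (cst^2/2) * Real.exp (-(x-cst)^2/2)) := by rw [h2]
    _ = _ := by ring

lemma final1D (γ α m τ : ℝ) (hγα : γ ≤ α) (hτ : 0 < τ) :
    ∫ x, (fun t => if t < γ then Real.exp (t - α) else Real.exp (-t)) (m + τ*x)
        ∂(gaussianReal 0 1)
      = (1/2) * Real.exp (m - α + τ^2/2) * erfc ((τ + (m-γ)/τ)/Real.sqrt 2)
        + (1/2) * Real.exp (-m + τ^2/2) * erfc ((τ - (m-γ)/τ)/Real.sqrt 2) := by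
  rw [integral_g01]
  set θ : ℝ := (γ - m)/τ with hθ
  have hint1 : Integrable (fun x => Real.exp (τ*x) * φ x) := by
    simp_rw [tilt τ]
    exact (integrable_gaussianPDFReal τ 1).const_mul _
  have hint2 : Integrable (fun x => Real.exp (-(τ*x)) * φ x) := by
    simp_rw [← neg_mul, tilt (-τ)]
    exact (integrable_gaussianPDFReal (-τ) 1).const_mul _
  have hsplit : ∀ x : ℝ,
      (fun t => if t < γ then Real.exp (t - α) else Real.exp (-t)) (m + τ*x) * φ x
      = Set.indicator (Set.Iio θ) (fun x => Real.exp (m - α) * (Real.exp (τ*x) * φ x)) x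
        + Set.indicator (Set.Ici θ) (fun x => Real.exp (-m) * (Real.exp (-(τ*x)) * φ x)) x := by
    intro x
    simp only
    by_cases hx : x < θ
    · have hcond : m + τ*x < γ := by
        rw [hθ] at hx
        have h := (lt_div_iff₀ hτ).mp hx
        linarith
      rw [Set.indicator_of_mem (Set.mem_Iio.mpr hx),
        Set.indicator_of_notMem (by simp only [Set.mem_Ici, not_le]; exact hx),
        add_zero, if_pos hcond, ← mul_assoc, ← Real.exp_add]
      congr 2
      ring
    · have hcond : ¬ (m + τ*x < γ) := by
        rw [hθ] at hx
        have h := (div_le_iff₀ hτ).mp (not_lt.mp hx)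
        simp only [not_lt]
        nlinarith
      rw [Set.indicator_of_notMem (by simpa using hx),
        Set.indicator_of_mem (Set.mem_Ici.mpr (not_lt.mp hx)),
        zero_add, if_neg hcond, ← mul_assoc, ← Real.exp_add]
      congr 2
      ring
  simp_rw [hsplit]
  rw [integral_add ((hint1.const_mul _).indicator measurableSet_Iio)
    ((hint2.const_mul _).indicator measurableSet_Ici)]
  rw [integral_indicator measurableSet_Iio, integral_indicator measurableSet_Ici]
  rw [integral_const_mul, integral_const_mul]
  have hT1 : ∫ x in Set.Iio θ, Real.exp (τ*x) * φ x
      = Real.exp (τ^2/2) * ((1/2) * erfc ((τ - θ)/Real.sqrt 2)) := by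
    simp_rw [tilt τ]
    rw [integral_const_mul, tail_Iio]
  have hT2 : ∫ x in Set.Ici θ, Real.exp (-(τ*x)) * φ x
      = Real.exp (τ^2/2) * ((1/2) * erfc ((θ + τ)/Real.sqrt 2)) := by
    simp_rw [← neg_mul, tilt (-τ)]
    rw [integral_const_mul, tail_Ici]
    norm_num
  rw [hT1, hT2]
  have harg1 : τ - θ = τ + (m-γ)/τ := by rw [hθ]; ring
  have harg2 : θ + τ = τ - (m-γ)/τ := by rw [hθ]; ring
  rw [harg1, harg2, Real.exp_add, Real.exp_add]
  ring


section HeadLemmas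

variable {d : ℕ}

lemma ip_add (w x y : Vec d) : ip w (x + y) = ip w x + ip w y := by
  simp only [ip, Prod.fst_add, Prod.snd_add, Pi.add_apply, mul_add, Finset.sum_add_distrib]
  ring

lemma ip_smul (w : Vec d) (c : ℝ) (x : Vec d) : ip w (c • x) = c * ip w x := by
  simp only [ip, Prod.smul_fst, Prod.smul_snd, Pi.smul_apply, smul_eq_mul, mul_add,
    Finset.mul_sum]
  rw [mul_left_comm]
  congr 1
  exact Finset.sum_congr rfl fun i _ => by ring

lemma ip_zero (w : Vec d) : ip w (0 : Vec d) = 0 := by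
  simp [ip]

lemma ip_self_eq_one {w : Vec d} (hw : norm2 w = 1) : ip w w = 1 := by
  have h2 : (0:ℝ) ≤ w.1^2 + ∑ i, w.2 i^2 := by positivity
  have h3 : w.1^2 + ∑ i, w.2 i^2 = 1 := by
    have := congrArg (fun t => t^2) hw
    simpa [norm2, Real.sq_sqrt h2] using this
  calc ip w w = w.1^2 + ∑ i, w.2 i^2 := by
        simp only [ip, pow_two]
      _ = 1 := h3

lemma ip_meas (w : Vec d) : Measurable (fun x : Vec d => ip w x) :=
  (measurable_fst.const_mul w.1).add
    (Finset.measurable_sum _ fun i _ => ((measurable_pi_apply i).comp measurable_snd).const_mul _)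

lemma exp_abs_eq_G {γ α : ℝ} (hγ : 0 < γ) (hγα : γ ≤ α) (s t : ℝ) (hs : s = 1 ∨ s = -1) :
    Real.exp (-|t + α * (if s * t < γ then -s else 0)|)
      = (fun u => if u < γ then Real.exp (u - α) else Real.exp (-u)) (s * t) := by
  rcases hs with hs | hs <;> subst hs
  · simp only [one_mul]
    by_cases h : t < γ
    · rw [if_pos h, if_pos h, mul_neg_one, abs_of_nonpos (by linarith)]
      congr 1
      ring
    · rw [if_neg h, if_neg h, mul_zero, add_zero,
        abs_of_nonneg (by push_neg at h; linarith)]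
  · simp only [neg_one_mul, neg_neg]
    by_cases h : -t < γ
    · rw [if_pos h, if_pos h, mul_one, abs_of_nonneg (by linarith)]
      congr 1
      ring
    · rw [if_neg h, if_neg h, mul_zero, add_zero,
        abs_of_nonpos (by push_neg at h; linarith)]
      congr 1
      ring

end HeadLemmas

/-- closed form of the population RCAD surrogate: if `α ≥ γ`, `‖w‖₂ = 1` and
`σ_w > 0`, then
`M_D(w) = (1/2) e^{β w₁ - α + σ_w²/2} erfc((σ_w + a_w)/√2)
        + (1/2) e^{-β w₁ + σ_w²/2} erfc((σ_w - a_w)/√2)`. -/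
theorem MD_closed_form (d : ℕ) (hd : 1 ≤ d) (β σ₁ : ℝ) (hβ : 0 < β) (hσ₁ : 0 < σ₁)
    (Cov : Matrix (Fin d) (Fin d) ℝ) (hCov : Cov.PosDef)
    (γ α : ℝ) (hγ : 0 < γ) (hαγ : γ ≤ α)
    (w : Vec d) (hw : norm2 w = 1) (hσw : 0 < sigw σ₁ Cov w) :
    MD β σ₁ Cov hCov γ α w
      = (1 / 2) * Real.exp (β * w.1 - α + sigw σ₁ Cov w ^ 2 / 2)
          * erfc ((sigw σ₁ Cov w + aw β σ₁ γ Cov w) / Real.sqrt 2)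
        + (1 / 2) * Real.exp (-(β * w.1) + sigw σ₁ Cov w ^ 2 / 2)
          * erfc ((sigw σ₁ Cov w - aw β σ₁ γ Cov w) / Real.sqrt 2) := by
  classical
  have hτ : 0 < sigw σ₁ Cov w := hσw
  have hτne : sigw σ₁ Cov w ≠ 0 := ne_of_gt hτ
  set G : ℝ → ℝ := fun t => if t < γ then Real.exp (t - α) else Real.exp (-t) with hG
  have hGmeas : Measurable G := by
    rw [hG]
    exact Measurable.ite measurableSet_Iio
      (Measurable.exp (measurable_id.sub_const α)) (Measurable.exp measurable_id.neg)
  have hGbdd : ∀ t, |G t| ≤ 1 := by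
    intro t
    rw [hG]
    simp only
    by_cases h : t < γ
    · rw [if_pos h, abs_of_nonneg (Real.exp_nonneg _)]
      exact Real.exp_le_one_iff.mpr (by linarith)
    · rw [if_neg h, abs_of_nonneg (Real.exp_nonneg _)]
      push_neg at h
      exact Real.exp_le_one_iff.mpr (by linarith)
  -- matrix facts
  set R : Matrix (Fin d) (Fin d) ℝ := hCov.posSemidef.1.eigenvectorUnitary.1 *
    Matrix.diagonal ((↑) ∘ (Real.sqrt ·) ∘ hCov.posSemidef.1.eigenvalues) *
    (star hCov.posSemidef.1.eigenvectorUnitary : Matrix (Fin d) (Fin d) ℝ) with hRdef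
  have hH : R.IsHermitian := by
    rw [hRdef, Matrix.star_eq_conjTranspose]
    exact Matrix.isHermitian_mul_mul_conjTranspose _ (Matrix.isHermitian_diagonal _)
  have hRsym : ∀ i j, R j i = R i j := by
    intro i j
    simpa using hH.apply i j
  have hRR : R * R = Cov := by
    have hsp := hCov.posSemidef.1.spectral_theorem
    rw [Unitary.conjStarAlgAut_apply] at hsp
    have hU := Unitary.coe_star_mul_self hCov.posSemidef.1.eigenvectorUnitary
    have hD : Matrix.diagonal ((fun x : ℝ => x) ∘ (Real.sqrt ·) ∘ hCov.posSemidef.1.eigenvalues)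
        * Matrix.diagonal ((fun x : ℝ => x) ∘ (Real.sqrt ·) ∘ hCov.posSemidef.1.eigenvalues)
        = Matrix.diagonal (RCLike.ofReal ∘ hCov.posSemidef.1.eigenvalues) := by
      rw [Matrix.diagonal_mul_diagonal]
      congr 1
      funext i
      simp [Real.mul_self_sqrt (hCov.posSemidef.eigenvalues_nonneg i)]
    rw [hRdef]
    conv_rhs => rw [hsp]
    simp only [Matrix.mul_assoc]
    rw [← Matrix.mul_assoc _ _ (Matrix.diagonal _ * _), hU, Matrix.one_mul,
      ← Matrix.mul_assoc (Matrix.diagonal _), hD]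
  set v : Fin d → ℝ := R.mulVec w.2 with hv
  have hmulvec : ∀ (z : Fin d → ℝ) (i : Fin d),
      R.mulVec z i = ∑ j, R i j * z j := fun z i => rfl
  have hsum_swap : ∀ z : Fin d → ℝ,
      (∑ i, w.2 i * R.mulVec z i) = ∑ j, v j * z j := by
    intro z
    simp_rw [hmulvec, hv]
    calc ∑ i, w.2 i * ∑ j, R i j * z j
        = ∑ i, ∑ j, w.2 i * (R i j * z j) := by
          simp_rw [Finset.mul_sum]
      _ = ∑ j, ∑ i, w.2 i * (R i j * z j) := by rw [Finset.sum_comm]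
      _ = ∑ j, (∑ i, R j i * w.2 i) * z j := by
          refine Finset.sum_congr rfl fun j _ => ?_
          rw [Finset.sum_mul]
          refine Finset.sum_congr rfl fun i _ => ?_
          rw [hRsym j i]
          ring
  have hvsq : (∑ j, v j ^ 2) = ∑ i, ∑ j, w.2 i * Cov i j * w.2 j := by
    have h1 : ∀ i k : Fin d, (∑ j, R j i * R j k)
        = Cov i k := by
      intro i k
      have h2 : (∑ j, R j i * R j k)
          = ∑ j, R i j * R j k := by
        refine Finset.sum_congr rfl fun j _ => ?_
        rw [hRsym i j]
      rw [h2, ← Matrix.mul_apply, hRR]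
    calc (∑ j, v j ^ 2)
        = ∑ j, ∑ i, ∑ k, (w.2 i * w.2 k) * (R j i * R j k) := by
          refine Finset.sum_congr rfl fun j _ => ?_
          rw [hv]
          simp_rw [hmulvec]
          rw [pow_two, Finset.sum_mul_sum]
          refine Finset.sum_congr rfl fun i _ => Finset.sum_congr rfl fun k _ => by ring
      _ = ∑ i, ∑ k, (w.2 i * w.2 k) * ∑ j, (R j i * R j k) := by
          rw [Finset.sum_comm]
          refine Finset.sum_congr rfl fun i _ => ?_
          rw [Finset.sum_comm]
          refine Finset.sum_congr rfl fun k _ => ?_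
          rw [Finset.mul_sum]
      _ = ∑ i, ∑ k, w.2 i * Cov i k * w.2 k := by
          refine Finset.sum_congr rfl fun i _ => Finset.sum_congr rfl fun k _ => ?_
          rw [h1]
          ring
  -- the integrand is measurable
  have hipww : ip w w = 1 := ip_self_eq_one hw
  have hfsimp : ∀ p : Vec d × ℝ,
      Real.exp (-|ip w (p.1 + α • lossGrad γ w p.1 p.2)|)
        = Real.exp (-|ip w p.1 + α * (if p.2 * ip w p.1 < γ then -p.2 else 0)|) := by
    intro p
    unfold lossGrad
    by_cases h : p.2 * ip w p.1 < γ
    · rw [if_pos h, if_pos h, ip_add, ip_smul, ip_smul, hipww]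
      congr 3
      ring
    · rw [if_neg h, if_neg h, smul_zero, ip_add, ip_zero]
      congr 3
      ring
  have hfmeas : Measurable (fun p : Vec d × ℝ =>
      Real.exp (-|ip w (p.1 + α • lossGrad γ w p.1 p.2)|)) := by
    have h1 : Measurable (fun p : Vec d × ℝ =>
        ip w p.1 + α * (if p.2 * ip w p.1 < γ then -p.2 else 0)) := by
      apply ((ip_meas w).comp measurable_fst).add
      apply Measurable.const_mul
      exact Measurable.ite
        (measurableSet_lt (measurable_snd.mul ((ip_meas w).comp measurable_fst))
          measurable_const)
        measurable_snd.neg measurable_const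
    have h2 : (fun p : Vec d × ℝ => Real.exp (-|ip w (p.1 + α • lossGrad γ w p.1 p.2)|))
        = fun p => Real.exp (-|ip w p.1 + α * (if p.2 * ip w p.1 < γ then -p.2 else 0)|) :=
      funext hfsimp
    rw [h2]
    exact (h1.abs.neg).exp
  have hgen : Measurable (gen β σ₁ Cov hCov (d := d)) := by
    unfold gen
    refine Measurable.prodMk (Measurable.prodMk ?_ ?_) ?_
    · exact (((show Measurable sgn from .of_discrete).comp measurable_fst).const_mul β).add
        ((measurable_fst.comp measurable_snd).const_mul σ₁)
    · apply measurable_pi_lambda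
      intro i
      have : (fun p : Bool × (ℝ × (Fin d → ℝ)) => R.mulVec p.2.2 i)
          = fun p => ∑ j, R i j * p.2.2 j := by
        funext p
        exact hmulvec p.2.2 i
      rw [this]
      exact Finset.measurable_sum _ fun j _ =>
        ((measurable_pi_apply j).comp (measurable_snd.comp measurable_snd)).const_mul _
    · exact (show Measurable sgn from .of_discrete).comp measurable_fst
  -- reduce MD to an integral over the base randomness
  have hMD : MD β σ₁ Cov hCov γ α w
      = ∫ p, G (β * w.1 + (sgn p.1 * (σ₁ * w.1)) * p.2.1
          + ∑ j, (sgn p.1 * v j) * p.2.2 j) ∂(baseMeasure d) := by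
    unfold MD Dist
    rw [integral_map hgen.aemeasurable hfmeas.aestronglyMeasurable]
    congr 1
    funext p
    obtain ⟨b, z1, z2⟩ := p
    have hs : sgn b = 1 ∨ sgn b = -1 := by cases b <;> simp [sgn]
    have hss : sgn b * sgn b = 1 := by rcases hs with h | h <;> rw [h] <;> norm_num
    rw [hfsimp]
    have hx1 : ip w ((gen β σ₁ Cov hCov (b, z1, z2)).1)
        = β * sgn b * w.1 + ((σ₁*w.1) * z1 + ∑ j, v j * z2 j) := by
      show ip w (β * sgn b + σ₁ * z1, R.mulVec z2) = _
      unfold ip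
      rw [hsum_swap z2]
      ring
    have hy : (gen β σ₁ Cov hCov (b, z1, z2)).2 = sgn b := rfl
    rw [hx1, hy]
    rw [exp_abs_eq_G hγ hαγ (sgn b) _ hs]
    rw [hG]
    congr 1
    have h2 : ∀ S : ℝ, sgn b * (β * sgn b * w.1 + ((σ₁*w.1) * z1 + S))
        = β * (sgn b * sgn b) * w.1 + (sgn b * (σ₁ * w.1)) * z1 + sgn b * S := by
      intro S; ring
    rw [h2, hss, Finset.mul_sum]
    congr 1
    · ring
    · exact Finset.sum_congr rfl fun j _ => by ring
  rw [hMD]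
  -- integrate out the sign bit
  unfold baseMeasure
  have hinner_meas : Measurable (fun p : Bool × (ℝ × (Fin d → ℝ)) =>
      G (β * w.1 + (sgn p.1 * (σ₁ * w.1)) * p.2.1 + ∑ j, (sgn p.1 * v j) * p.2.2 j)) := by
    apply hGmeas.comp
    apply Measurable.add
    · apply Measurable.add measurable_const
      exact (((show Measurable sgn from .of_discrete).comp measurable_fst).mul_const _).mul
        (measurable_fst.comp measurable_snd)
    · exact Finset.measurable_sum _ fun j _ =>
        (((show Measurable sgn from .of_discrete).comp measurable_fst).mul_const _).mul
          ((measurable_pi_apply j).comp (measurable_snd.comp measurable_snd))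
  rw [integral_prod _ (integrable_bdd _ hinner_meas.aestronglyMeasurable 1 (fun p => hGbdd _))]
  have hJ : ∀ b : Bool,
      (∫ q : ℝ × (Fin d → ℝ), G (β * w.1 + (sgn b * (σ₁ * w.1)) * q.1
          + ∑ j, (sgn b * v j) * q.2 j) ∂((gaussianReal 0 1).prod (stdGaussian d)))
      = (1 / 2) * Real.exp (β * w.1 - α + sigw σ₁ Cov w ^ 2 / 2)
          * erfc ((sigw σ₁ Cov w + aw β σ₁ γ Cov w) / Real.sqrt 2)
        + (1 / 2) * Real.exp (-(β * w.1) + sigw σ₁ Cov w ^ 2 / 2)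
          * erfc ((sigw σ₁ Cov w - aw β σ₁ γ Cov w) / Real.sqrt 2) := by
    intro b
    have hs : sgn b = 1 ∨ sgn b = -1 := by cases b <;> simp [sgn]
    have hss : sgn b * sgn b = 1 := by rcases hs with h | h <;> rw [h] <;> norm_num
    have hq_meas : Measurable (fun q : ℝ × (Fin d → ℝ) =>
        G (β * w.1 + (sgn b * (σ₁ * w.1)) * q.1 + ∑ j, (sgn b * v j) * q.2 j)) := by
      apply hGmeas.comp
      apply Measurable.add
      · exact measurable_const.add (measurable_fst.const_mul _)
      · exact Finset.measurable_sum _ fun j _ =>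
          ((measurable_pi_apply j).comp measurable_snd).const_mul _
    rw [integral_prod _ (integrable_bdd _ hq_meas.aestronglyMeasurable 1 (fun q => hGbdd _))]
    have hstep : ∀ x : ℝ,
        (∫ y, G ((β * w.1 + (sgn b * (σ₁ * w.1)) * x) + ∑ j, (sgn b * v j) * y j)
          ∂(stdGaussian d))
        = ∫ u, G (β * w.1 + ((sgn b * (σ₁ * w.1)) * x
            + Real.sqrt (∑ j, (sgn b * v j) ^ 2) * u)) ∂(gaussianReal 0 1) := by
      intro x
      rw [lin_pi d (fun j => sgn b * v j) (β * w.1 + (sgn b * (σ₁ * w.1)) * x) G hGmeas hGbdd]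
      congr 1
      funext u
      congr 1
      ring
    simp_rw [hstep]
    rw [lin2 hGmeas hGbdd (β * w.1) (sgn b * (σ₁ * w.1)) (Real.sqrt (∑ j, (sgn b * v j) ^ 2))]
    have hτeq : Real.sqrt ((sgn b * (σ₁ * w.1))^2 + (Real.sqrt (∑ j, (sgn b * v j) ^ 2))^2)
        = sigw σ₁ Cov w := by
      rw [Real.sq_sqrt (Finset.sum_nonneg fun j _ => sq_nonneg _)]
      unfold sigw quadForm
      congr 1
      have hsq1 : (sgn b * (σ₁ * w.1))^2 = σ₁^2 * w.1^2 := by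
        rw [mul_pow, pow_two, hss]; ring
      have hsq2 : (∑ j, (sgn b * v j) ^ 2) = ∑ j, v j ^ 2 := by
        refine Finset.sum_congr rfl fun j _ => ?_
        rw [mul_pow, pow_two, hss, one_mul]
      rw [hsq1, hsq2, hvsq]
    rw [hτeq]
    have hfin := final1D γ α (β * w.1) (sigw σ₁ Cov w) hαγ hτ
    have hGform : ∀ x : ℝ, G (β * w.1 + sigw σ₁ Cov w * x)
        = (fun t => if t < γ then Real.exp (t - α) else Real.exp (-t))
            (β * w.1 + sigw σ₁ Cov w * x) := by
      intro x; rw [hG]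
    simp_rw [hGform]
    rw [hfin]
    have haw : aw β σ₁ γ Cov w = (β * w.1 - γ) / sigw σ₁ Cov w := rfl
    rw [haw]
  simp_rw [hJ]
  rw [integral_const]
  simp
  have hu : ({false, true} : Set Bool) = Set.univ := by ext b; cases b <;> simp
  rw [hu, probReal_univ, one_mul]
end RCAD
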